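/- arXiv:2510.03791 — 3 statements merged into one kernel-verified Lean document; each statement's English description precedes it below -/
import Mathlib

section
/- Let E be an annihilator multiplication A-module and V a submodule of E with ann(E) = ann(V). Then V is an annihilator multiplication A-module. -/
/-!
Both sides of the defining equation survive passage from `E` to `V`: the annihilator of `v`
is the same in `V` as in `E`, and `ann(I • M) = ann(M) : I` depends on `M` only through `ann(M)`,
which is the same for `V` and `E` by hypothesis.
-/

/-- An `A`-module `E` is an *annihilator multiplication module* if for every `e ∈ E`
there exists a finitely generated ideal `I` of `A` such that `ann(e) = ann(IE)`. -/
def IsAnnMultiplication (A : Type*) [CommRing A] (E : Type*) [AddCommGroup E]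
    [Module A E] : Prop :=
  ∀ e : E, ∃ I : Ideal A, I.FG ∧
    (Submodule.span A {e}).annihilator = (I • (⊤ : Submodule A E)).annihilator

namespace Submodule

variable {R M N : Type*} [CommSemiring R] [AddCommMonoid M] [Module R M]
  [AddCommMonoid N] [Module R N]

theorem annihilator_span_singleton_map_of_injective {f : M →ₗ[R] N}
    (hf : Function.Injective f) (m : M) :
    (span R {f m}).annihilator = (span R {m}).annihilator := by
  ext r
  simp only [mem_annihilator_span_singleton, ← map_smul, map_eq_zero_iff f hf]

theorem annihilator_smul_top_eq_colon (I : Ideal R) :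
    (I • (⊤ : Submodule R M)).annihilator = (Module.annihilator R M).colon (I : Set R) := by
  ext r
  rw [mem_annihilator, mem_colon]
  simp only [SetLike.mem_coe, Module.mem_annihilator, smul_eq_mul]
  constructor
  · intro h i hi m
    rw [mul_smul]
    exact h _ (smul_mem_smul hi mem_top)
  · intro h n hn
    refine smul_induction_on hn (fun i hi m _ ↦ ?_) (fun x y hx hy ↦ ?_)
    · rw [← mul_smul, h i hi m]
    · rw [smul_add, hx, hy, add_zero]

end Submodule

theorem submodule_isAnnMultiplication_general {A : Type*} [CommRing A]
    {E : Type*} [AddCommGroup E] [Module A E]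
    (hE : IsAnnMultiplication A E) (V : Submodule A E)
    (hann : (⊤ : Submodule A E).annihilator = V.annihilator) :
    IsAnnMultiplication A V := by
  intro v
  obtain ⟨I, hI, h⟩ := hE v
  refine ⟨I, hI, ?_⟩
  rw [← Submodule.annihilator_span_singleton_map_of_injective V.injective_subtype,
    Submodule.subtype_apply, h, Submodule.annihilator_smul_top_eq_colon,
    Submodule.annihilator_smul_top_eq_colon, ← Submodule.annihilator_top, hann]

/-- If `E` is an annihilator multiplication module and `V` is a submodule with
`ann(E) = ann(V)`, then `V` is an annihilator multiplication module. -/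
theorem submodule_isAnnMultiplication {A : Type*} [CommRing A] [Nontrivial A]
    {E : Type*} [AddCommGroup E] [Module A E] [Nontrivial E]
    (hE : IsAnnMultiplication A E) (V : Submodule A E)
    (hann : (⊤ : Submodule A E).annihilator = V.annihilator) :
    IsAnnMultiplication A V :=
  submodule_isAnnMultiplication_general hE V hann
end

section
/- Let E be an A-module that is the internal direct sum of a family {E_i}_{i∈Δ} of submodules (i.e., the family is independent and its sum is E) such that ann(E_i) = ann(E_j) for all i ≠ j in Δ. Then E is an annihilator multiplication module if and only if E_i is an annihilator multiplication module for every i ∈ Δ. -/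
section

open Submodule

variable {A : Type*} [CommRing A] {E F : Type*} [AddCommGroup E] [Module A E]
  [AddCommGroup F] [Module A F]

namespace Submodule

theorem annihilator_smul_eq_colon (I : Ideal A) (N : Submodule A E) :
    (I • N).annihilator = N.annihilator.colon I := by
  ext a
  simp only [mem_annihilator, mem_colon, smul_eq_mul, SetLike.mem_coe]
  constructor
  · intro h x hx n hn
    rw [mul_smul]
    exact h _ (smul_mem_smul hx hn)
  · intro h m hm
    refine smul_induction_on hm (fun x hx n hn => ?_) fun m₁ m₂ h₁ h₂ => ?_
    · rw [← mul_smul, h x hx n hn]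
    · rw [smul_add, h₁, h₂, add_zero]

theorem colon_finsetSup {ι : Type*} (N : Submodule A E) (s : Finset ι) (p : ι → Submodule A E) :
    N.colon ↑(s.sup p) = ⨅ i ∈ s, N.colon ↑(p i) := by
  rw [Finset.sup_eq_iSup, iSup_eq_span' p (· ∈ s), colon_span, colon_iUnion]
  simp_rw [colon_iUnion]

theorem annihilator_span_singleton_apply_of_injective {f : E →ₗ[A] F}
    (hf : Function.Injective f) (x : E) :
    (span A {f x}).annihilator = (span A {x}).annihilator := by
  ext a
  simp only [mem_annihilator_span_singleton, ← map_smul, map_eq_zero_iff f hf]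

theorem annihilator_eq_of_iSup_eq_top {ι : Type*} {p : ι → Submodule A E}
    (htop : ⨆ i, p i = ⊤)
    (hann : ∀ i j, i ≠ j → (p i).annihilator = (p j).annihilator) (i : ι) :
    (p i).annihilator = Module.annihilator A E := by
  rw [← annihilator_top, ← htop, annihilator_iSup]
  refine le_antisymm (le_iInf fun j => ?_) (iInf_le _ i)
  rcases eq_or_ne i j with rfl | hij
  · exact le_rfl
  · exact (hann i j hij).le

end Submodule

theorem DFinsupp.annihilator_span_singleton {ι : Type*} [DecidableEq ι] {M : ι → Type*}
    [∀ i, AddCommGroup (M i)] [∀ i, Module A (M i)] [∀ i (x : M i), Decidable (x ≠ 0)]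
    (d : Π₀ i, M i) :
    (span A {d}).annihilator = ⨅ i ∈ d.support, (span A {d i}).annihilator := by
  ext a
  simp only [mem_annihilator_span_singleton, Ideal.mem_iInf, DFinsupp.ext_iff, smul_apply,
    zero_apply, mem_support_toFun, ne_eq]
  refine ⟨fun h i _ => h i, fun h i => ?_⟩
  by_cases hi : d i = 0
  · rw [hi, smul_zero]
  · exact h i hi

theorem isAnnMultiplication_iff_colon :
    IsAnnMultiplication A E ↔ ∀ e : E, ∃ I : Ideal A, I.FG ∧
      (span A {e}).annihilator = (Module.annihilator A E).colon I := by
  simp only [IsAnnMultiplication, annihilator_smul_eq_colon, annihilator_top]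

theorem IsAnnMultiplication.submodule {V : Submodule A E} (h : IsAnnMultiplication A E)
    (hV : V.annihilator = Module.annihilator A E) : IsAnnMultiplication A V := by
  rw [isAnnMultiplication_iff_colon] at h ⊢
  intro x
  obtain ⟨I, hIfg, hI⟩ := h x
  refine ⟨I, hIfg, ?_⟩
  rw [← annihilator_span_singleton_apply_of_injective V.subtype_injective, subtype_apply, hI, ← hV]

theorem isAnnMultiplication_of_iSupIndep {ι : Type*} {p : ι → Submodule A E}
    (hind : iSupIndep p) (htop : ⨆ i, p i = ⊤)
    (hann : ∀ i, (p i).annihilator = Module.annihilator A E)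
    (h : ∀ i, IsAnnMultiplication A (p i)) : IsAnnMultiplication A E := by
  classical
  simp only [isAnnMultiplication_iff_colon, hann] at h ⊢
  intro e
  set φ := hind.linearEquiv htop
  set d := φ.symm e
  choose I hIfg hI using fun i => h i (d i)
  refine ⟨d.support.sup I, fg_finset_sup _ _ fun i _ => hIfg i, ?_⟩
  calc (span A {e}).annihilator = (span A {d}).annihilator := by
        rw [← annihilator_span_singleton_apply_of_injective φ.injective, LinearEquiv.coe_coe,
          φ.apply_symm_apply]
    _ = ⨅ i ∈ d.support, (span A {d i}).annihilator := DFinsupp.annihilator_span_singleton d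
    _ = ⨅ i ∈ d.support, (Module.annihilator A E).colon ↑(I i) := by simp_rw [hI]
    _ = (Module.annihilator A E).colon ↑(d.support.sup I) := (colon_finsetSup ..).symm

end

theorem directSum_isAnnMultiplication_iff_general {A : Type*} [CommRing A]
    {E : Type*} [AddCommGroup E] [Module A E]
    {Δ : Type*} (Efam : Δ → Submodule A E)
    (hindep : iSupIndep Efam) (hsum : (⨆ i, Efam i) = ⊤)
    (hann : ∀ i j, i ≠ j → (Efam i).annihilator = (Efam j).annihilator) :
    IsAnnMultiplication A E ↔ ∀ i, IsAnnMultiplication A (Efam i) := by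
  have hannE := Submodule.annihilator_eq_of_iSup_eq_top hsum hann
  exact ⟨fun h i => h.submodule (hannE i), isAnnMultiplication_of_iSupIndep hindep hsum hannE⟩

/-- If `E` is the internal direct sum of a family `{Eᵢ}` of submodules with
`ann(Eᵢ) = ann(Eⱼ)` for all `i ≠ j`, then `E` is an annihilator multiplication module
iff each `Eᵢ` is. -/
theorem directSum_isAnnMultiplication_iff {A : Type*} [CommRing A] [Nontrivial A]
    {E : Type*} [AddCommGroup E] [Module A E] [Nontrivial E]
    {Δ : Type*} (Efam : Δ → Submodule A E)
    (hindep : iSupIndep Efam) (hsum : (⨆ i, Efam i) = ⊤)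
    (hann : ∀ i j, i ≠ j → (Efam i).annihilator = (Efam j).annihilator) :
    IsAnnMultiplication A E ↔ ∀ i, IsAnnMultiplication A (Efam i) :=
  directSum_isAnnMultiplication_iff_general Efam hindep hsum hann
end

section
/- Let E be a comultiplication A-module. Then E is a multiplication module if and only if E is an annihilator multiplication module. -/
namespace Submodule

variable {A E : Type*} [CommRing A] [AddCommGroup E] [Module A E]

theorem exists_fg_le_and_mem_smul {I : Ideal A} {N : Submodule A E} {e : E} (he : e ∈ I • N) :
    ∃ J : Ideal A, J.FG ∧ J ≤ I ∧ e ∈ J • N := by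
  refine smul_induction_on he (fun r hr n hn => ?_) fun x y hx hy => ?_
  · exact ⟨A ∙ r, fg_span_singleton r, (span_singleton_le_iff_mem r I).mpr hr,
      smul_mem_smul (mem_span_singleton_self r) hn⟩
  · obtain ⟨J₁, hJ₁, hJ₁I, hx⟩ := hx
    obtain ⟨J₂, hJ₂, hJ₂I, hy⟩ := hy
    exact ⟨J₁ ⊔ J₂, Submodule.FG.sup hJ₁ hJ₂, sup_le hJ₁I hJ₂I,
      add_mem (smul_mono_left le_sup_left hx) (smul_mono_left le_sup_right hy)⟩

theorem eq_of_annihilator_eq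
    (hco : ∀ V : Submodule A E, ∀ e : E, e ∈ V ↔ ∀ a ∈ V.annihilator, a • e = 0)
    {V W : Submodule A E} (h : V.annihilator = W.annihilator) : V = W := by
  ext e
  rw [hco V, hco W, h]

theorem exists_eq_smul_top_of_span_singleton
    (hcyc : ∀ e : E, ∃ I : Ideal A, A ∙ e = I • (⊤ : Submodule A E)) (V : Submodule A E) :
    ∃ I : Ideal A, V = I • (⊤ : Submodule A E) := by
  choose I hI using hcyc
  refine ⟨⨆ e ∈ V, I e, ?_⟩
  conv_lhs => rw [← span_eq V, span_eq_iSup_of_singleton_spans]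
  simp only [iSup_smul, hI, SetLike.mem_coe]

end Submodule

section

variable {A E : Type*} [CommRing A] [AddCommGroup E] [Module A E]

theorem isAnnMultiplication_of_forall_eq_smul_top
    (hmul : ∀ V : Submodule A E, ∃ I : Ideal A, V = I • (⊤ : Submodule A E)) :
    IsAnnMultiplication A E := by
  intro e
  obtain ⟨I, hI⟩ := hmul (A ∙ e)
  obtain ⟨J, hJ, hJI, heJ⟩ :=
    Submodule.exists_fg_le_and_mem_smul (hI ▸ Submodule.mem_span_singleton_self e)
  have hspan : A ∙ e = J • ⊤ :=
    le_antisymm ((Submodule.span_singleton_le_iff_mem e _).mpr heJ)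
      (hI ▸ Submodule.smul_mono_left hJI)
  exact ⟨J, hJ, by rw [hspan]⟩

theorem forall_eq_smul_top_of_isAnnMultiplication
    (hco : ∀ V : Submodule A E, ∀ e : E, e ∈ V ↔ ∀ a ∈ V.annihilator, a • e = 0)
    (hann : IsAnnMultiplication A E) (V : Submodule A E) :
    ∃ I : Ideal A, V = I • (⊤ : Submodule A E) := by
  refine Submodule.exists_eq_smul_top_of_span_singleton (fun e => ?_) V
  obtain ⟨I, -, hI⟩ := hann e
  exact ⟨I, Submodule.eq_of_annihilator_eq hco hI⟩

end

theorem comultiplication_multiplication_iff_general {A : Type*} [CommRing A]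
    {E : Type*} [AddCommGroup E] [Module A E]
    (hco : ∀ V : Submodule A E, ∀ e : E, e ∈ V ↔ ∀ a ∈ V.annihilator, a • e = 0) :
    (∀ V : Submodule A E, ∃ I : Ideal A, V = I • (⊤ : Submodule A E)) ↔
      IsAnnMultiplication A E :=
  ⟨isAnnMultiplication_of_forall_eq_smul_top, forall_eq_smul_top_of_isAnnMultiplication hco⟩

/-- A comultiplication module `E` is a multiplication module iff it is an annihilator
multiplication module. -/
theorem comultiplication_multiplication_iff {A : Type*} [CommRing A] [Nontrivial A]
    {E : Type*} [AddCommGroup E] [Module A E] [Nontrivial E]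
    (hco : ∀ V : Submodule A E, ∀ e : E, e ∈ V ↔ ∀ a ∈ V.annihilator, a • e = 0) :
    (∀ V : Submodule A E, ∃ I : Ideal A, V = I • (⊤ : Submodule A E)) ↔
      IsAnnMultiplication A E :=
  comultiplication_multiplication_iff_general hco
end
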